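/- arXiv:1404.0950 — 2 statements merged into one kernel-verified Lean document; each statement's English description precedes it below -/
import Mathlib

section
/- Suppose q ≥ 3 and α, β are vertices of the Hamming graph H(m,q) with d(α,β) = 3. Then Γ_2(α) ∩ Γ_2(β) = { γ(α|i,j|a,β_j) : i, j ∈ diff(α,β), i ≠ j, a ≠ α_i and a ≠ β_i }, and this set has size 6(q−2). -/
variable {M Q : Type*}

/-- The set of entries in which two vertices of the Hamming graph differ. -/
def diffSet [Fintype M] [DecidableEq Q] (α β : M → Q) : Finset M :=
  Finset.univ.filter fun i => α i ≠ β i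

/-- `GammaSet α r` is the set of vertices at Hamming distance exactly `r` from `α`. -/
def GammaSet [Fintype M] [DecidableEq Q] (α : M → Q) (r : ℕ) : Set (M → Q) :=
  {β | hammingDist α β = r}

/-- The neighbour set `C₁` of a code `C`. -/
def neighbourSet [Fintype M] [DecidableEq Q] (C : Set (M → Q)) : Set (M → Q) :=
  {ν | ν ∉ C ∧ ∃ c ∈ C, hammingDist ν c = 1}

/-- An automorphism of the Hamming graph: a bijection of vertices preserving Hamming distance. -/
def IsAut [Fintype M] [DecidableEq Q] (x : (M → Q) ≃ (M → Q)) : Prop :=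
  ∀ a b, hammingDist (x a) (x b) = hammingDist a b

/-- An elusive triple `(C, α, x)`. -/
def IsElusiveTriple [Fintype M] [DecidableEq Q] (C : Set (M → Q)) (α : M → Q)
    (x : (M → Q) ≃ (M → Q)) : Prop :=
  IsAut x ∧ x '' neighbourSet C = neighbourSet C ∧ α ∈ C ∧ x α ∉ C

/-- A `(C,α,x)`-associate: a vertex in `Γ₂(α) ∩ C^x`. -/
def IsAssociate [Fintype M] [DecidableEq Q] (C : Set (M → Q)) (α : M → Q)
    (x : (M → Q) ≃ (M → Q)) (π : M → Q) : Prop :=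
  π ∈ GammaSet α 2 ∧ π ∈ x '' C

/-- `MC C π π' = |C ∩ Γ₂(π) ∩ Γ₂(π')|`, the number of mutual codewords. -/
noncomputable def MC [Fintype M] [DecidableEq Q] (C : Set (M → Q)) (π π' : M → Q) : ℕ :=
  (C ∩ GammaSet π 2 ∩ GammaSet π' 2).ncard

/-- The code `C` has minimum distance `δ`. -/
def HasMinDist [Fintype M] [DecidableEq Q] (C : Set (M → Q)) (δ : ℕ) : Prop :=
  IsLeast {d : ℕ | ∃ a ∈ C, ∃ b ∈ C, a ≠ b ∧ hammingDist a b = d} δ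

/-- `IsCodeDist C β k` says that `d(β, C) = k`. -/
def IsCodeDist [Fintype M] [DecidableEq Q] (C : Set (M → Q)) (β : M → Q) (k : ℕ) : Prop :=
  IsLeast {d : ℕ | ∃ γ ∈ C, hammingDist β γ = d} k

/-- `update2 α i j a b` is the vertex `γ(α|i,j|a,b)`. -/
def update2 [DecidableEq M] (α : M → Q) (i j : M) (a b : Q) : M → Q :=
  Function.update (Function.update α i a) j b

/-- `update3 α i j k a b c` is the vertex `γ(α|i,j,k|a,b,c)`. -/
def update3 [DecidableEq M] (α : M → Q) (i j k : M) (a b c : Q) : M → Q :=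
  Function.update (Function.update (Function.update α i a) j b) k c

/-!
Write `A = diff(α,γ)`, `B = diff(β,γ)`, `D = diff(α,β)`. Every entry of `D` lies in `A ∪ B`, and
an entry outside `D` lies in `A` iff it lies in `B`; so `D ⊆ A ∪ B ⊆ D ∪ (A ∩ B)`. With
`|A| = |B| = 2` and `|D| = 3` this forces `A ∪ B = D` and `A ∩ B = {i}`: then `A = {i, j}` with
`γ_j = β_j`, which is the claimed shape. Conversely `γ(α|i,j|a,β_j)` differs from `α` in `{i, j}`
and from `β` in `D \ {j}`; these two sets recover `i` and `j`, so the parametrisation by the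
`6` ordered pairs of `D` and the `q - 2` admissible symbols is injective.
-/

open Finset

section HammingGeometry

variable [Fintype M] [DecidableEq Q] {α β γ : M → Q}

theorem mem_diffSet {i : M} : i ∈ diffSet α β ↔ α i ≠ β i := by
  simp [diffSet]

variable [DecidableEq M]

theorem diffSet_subset_union_diffSet : diffSet α β ⊆ diffSet α γ ∪ diffSet β γ := by
  intro p hp
  simp only [mem_union, mem_diffSet] at hp ⊢
  by_contra! h
  exact hp (h.1.trans h.2.symm)

theorem union_diffSet_subset :
    diffSet α γ ∪ diffSet β γ ⊆ diffSet α β ∪ (diffSet α γ ∩ diffSet β γ) := by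
  intro p hp
  by_cases hαβ : α p = β p
  · simp only [mem_union, mem_inter, mem_diffSet, hαβ] at hp ⊢
    tauto
  · exact mem_union_left _ (mem_diffSet.mpr hαβ)

end HammingGeometry

theorem union_eq_and_card_inter_eq_one_of_squeeze {ι : Type*} [DecidableEq ι]
    {A B D : Finset ι} (hA : #A = 2) (hB : #B = 2) (hD : #D = 3)
    (hlow : D ⊆ A ∪ B) (hup : A ∪ B ⊆ D ∪ (A ∩ B)) :
    A ∪ B = D ∧ #(A ∩ B) = 1 := by
  have hsum := card_union_add_card_inter A B
  have hge := card_le_card hlow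
  have hle := (card_le_card hup).trans (card_union_le D (A ∩ B))
  refine ⟨(eq_of_subset_of_card_le hlow ?_).symm, ?_⟩ <;> omega

section Update2

variable [DecidableEq M] {α : M → Q} {i j : M} {a b : Q}

theorem update2_apply_right : update2 α i j a b j = b := by
  simp [update2]

theorem update2_apply_left (hij : i ≠ j) : update2 α i j a b i = a := by
  simp [update2, Function.update_of_ne hij]

theorem update2_apply_of_ne {p : M} (hpi : p ≠ i) (hpj : p ≠ j) : update2 α i j a b p = α p := by
  simp [update2, Function.update_of_ne hpj, Function.update_of_ne hpi]

variable [Fintype M] [DecidableEq Q] {β : M → Q}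

theorem diffSet_update2_left (hjD : j ∈ diffSet α β) (hij : i ≠ j) (hai : a ≠ α i) :
    diffSet α (update2 α i j a (β j)) = {i, j} := by
  ext p
  rw [mem_diffSet]
  by_cases hpj : p = j
  · subst hpj
    simpa [update2_apply_right] using mem_diffSet.mp hjD
  by_cases hpi : p = i
  · subst hpi
    simpa [update2_apply_left hij] using hai.symm
  · simp [update2_apply_of_ne hpi hpj, hpi, hpj]

theorem diffSet_update2_right (hiD : i ∈ diffSet α β) (hij : i ≠ j) (hai : a ≠ β i) :
    diffSet β (update2 α i j a (β j)) = (diffSet α β).erase j := by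
  ext p
  rw [mem_diffSet, mem_erase, mem_diffSet]
  by_cases hpj : p = j
  · subst hpj
    simp [update2_apply_right]
  by_cases hpi : p = i
  · subst hpi
    simp [update2_apply_left hij, hij, hai.symm, mem_diffSet.mp hiD]
  · simp [update2_apply_of_ne hpi hpj, hpj, ne_comm]

end Update2

section Update2Params

variable [Fintype M] [DecidableEq Q] [Fintype Q] {α β : M → Q}

def update2Params (α β : M → Q) : Finset (Σ _ : M × M, Q) :=
  (diffSet α β).offDiag.sigma fun p => ({α p.1, β p.1} : Finset Q)ᶜ

theorem card_update2Params (h : hammingDist α β = 3) :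
    #(update2Params α β) = 6 * (Fintype.card Q - 2) := by
  have hpair : ∀ p ∈ (diffSet α β).offDiag, #({α p.1, β p.1} : Finset Q)ᶜ = Fintype.card Q - 2 :=
    fun p hp => by
      rw [card_compl, card_pair (mem_diffSet.mp (mem_offDiag.mp hp).1)]
  rw [update2Params, card_sigma, sum_congr rfl hpair, sum_const, offDiag_card,
    show #(diffSet α β) = 3 from h, smul_eq_mul]

end Update2Params

section CommonNeighbours

variable [Fintype M] [DecidableEq M] [DecidableEq Q] {α β : M → Q}

theorem exists_eq_update2_of_mem_gammaSet_inter (h : hammingDist α β = 3) {γ : M → Q}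
    (hγ : γ ∈ GammaSet α 2 ∩ GammaSet β 2) :
    ∃ i ∈ diffSet α β, ∃ j ∈ diffSet α β, i ≠ j ∧
      ∃ a : Q, a ≠ α i ∧ a ≠ β i ∧ γ = update2 α i j a (β j) := by
  have hA : #(diffSet α γ) = 2 := hγ.1
  have hB : #(diffSet β γ) = 2 := hγ.2
  have hD : #(diffSet α β) = 3 := h
  obtain ⟨hunion, hinter⟩ := union_eq_and_card_inter_eq_one_of_squeeze hA hB hD
    diffSet_subset_union_diffSet union_diffSet_subset
  obtain ⟨i, hAB⟩ := card_eq_one.mp hinter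
  have hi : i ∈ diffSet α γ ∩ diffSet β γ := hAB ▸ mem_singleton_self i
  obtain ⟨hiA, hiB⟩ := mem_inter.mp hi
  obtain ⟨j, hji, hA⟩ : ∃ j, i ≠ j ∧ diffSet α γ = {i, j} := by
    obtain ⟨x, y, hxy, hxyA⟩ := card_eq_two.mp hA
    rw [hxyA, mem_insert, mem_singleton] at hiA
    rcases hiA with rfl | rfl
    · exact ⟨y, hxy, hxyA⟩
    · exact ⟨x, hxy.symm, hxyA.trans (pair_comm _ _)⟩
  have hjB : j ∉ diffSet β γ := fun hjB => by
    have : j ∈ diffSet α γ ∩ diffSet β γ := mem_inter.mpr ⟨hA ▸ by simp, hjB⟩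
    exact hji (mem_singleton.mp (hAB ▸ this)).symm
  have hAD : ∀ p ∈ diffSet α γ, p ∈ diffSet α β := fun p hp => hunion ▸ mem_union_left _ hp
  refine ⟨i, hAD i hiA, j, hAD j (hA ▸ by simp), hji, γ i,
    fun h => mem_diffSet.mp hiA h.symm, fun h => mem_diffSet.mp hiB h.symm, ?_⟩
  funext p
  by_cases hpj : p = j
  · subst hpj
    simpa [update2_apply_right, mem_diffSet, eq_comm] using hjB
  by_cases hpi : p = i
  · subst hpi
    rw [update2_apply_left hji]
  · have hpA : p ∉ diffSet α γ := by simp [hA, hpi, hpj]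
    simpa [update2_apply_of_ne hpi hpj, mem_diffSet, eq_comm] using hpA

theorem gammaSet_inter_eq (h : hammingDist α β = 3) :
    GammaSet α 2 ∩ GammaSet β 2 =
      {γ | ∃ i ∈ diffSet α β, ∃ j ∈ diffSet α β, i ≠ j ∧
        ∃ a : Q, a ≠ α i ∧ a ≠ β i ∧ γ = update2 α i j a (β j)} := by
  ext γ
  refine ⟨exists_eq_update2_of_mem_gammaSet_inter h, ?_⟩
  rintro ⟨i, hiD, j, hjD, hij, a, haα, haβ, rfl⟩
  constructor
  · change #(diffSet α _) = 2
    rw [diffSet_update2_left hjD hij haα, card_pair hij]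
  · change #(diffSet β _) = 2
    rw [diffSet_update2_right hiD hij haβ, card_erase_of_mem hjD]
    exact congrArg (· - 1) h

variable [Fintype Q]

theorem gammaSet_inter_eq_image (h : hammingDist α β = 3) :
    GammaSet α 2 ∩ GammaSet β 2 =
      (fun t : Σ _ : M × M, Q => update2 α t.1.1 t.1.2 t.2 (β t.1.2)) '' update2Params α β := by
  rw [gammaSet_inter_eq h]
  ext γ
  simp only [update2Params, Set.mem_ofPred_eq, Set.mem_image, mem_coe, mem_sigma, mem_offDiag,
    mem_compl, mem_insert, mem_singleton, not_or, Sigma.exists]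
  constructor
  · rintro ⟨i, hiD, j, hjD, hij, a, haα, haβ, rfl⟩
    exact ⟨(i, j), a, ⟨⟨hiD, hjD, hij⟩, haα, haβ⟩, rfl⟩
  · rintro ⟨⟨i, j⟩, a, ⟨⟨hiD, hjD, hij⟩, haα, haβ⟩, rfl⟩
    exact ⟨i, hiD, j, hjD, hij, a, haα, haβ, rfl⟩

theorem injOn_update2Params :
    Set.InjOn (fun t : Σ _ : M × M, Q => update2 α t.1.1 t.1.2 t.2 (β t.1.2))
      (update2Params α β) := by
  rintro ⟨⟨i, j⟩, a⟩ ht ⟨⟨i', j'⟩, a'⟩ ht' heq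
  simp only [update2Params, mem_coe, mem_sigma, mem_offDiag, mem_compl, mem_insert,
    mem_singleton, not_or] at ht ht'
  obtain ⟨⟨hiD, hjD, hij⟩, haα, haβ⟩ := ht
  obtain ⟨⟨hiD', -, hij'⟩, haα', haβ'⟩ := ht'
  dsimp only at heq
  have hjj : j = j' := by
    have := congrArg (diffSet β) heq
    rwa [diffSet_update2_right hiD hij haβ, diffSet_update2_right hiD' hij' haβ',
      erase_inj _ hjD] at this
  subst hjj
  have hii : i = i' := by
    have := congrArg (diffSet α) heq
    rwa [diffSet_update2_left hjD hij haα, diffSet_update2_left hjD hij' haα',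
      insert_inj (by simpa using hij)] at this
  subst hii
  obtain rfl : a = a' := by simpa [update2_apply_left hij] using congrFun heq i
  rfl

theorem ncard_gammaSet_inter (h : hammingDist α β = 3) :
    (GammaSet α 2 ∩ GammaSet β 2).ncard = 6 * (Fintype.card Q - 2) := by
  rw [gammaSet_inter_eq_image h, injOn_update2Params.ncard_image,
    Set.ncard_coe_finset, card_update2Params h]

end CommonNeighbours

theorem stmt_6_general (m q : ℕ) (α β : Fin m → Fin q)
    (h : hammingDist α β = 3) :
    GammaSet α 2 ∩ GammaSet β 2 =
      {γ | ∃ i ∈ diffSet α β, ∃ j ∈ diffSet α β, i ≠ j ∧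
        ∃ a : Fin q, a ≠ α i ∧ a ≠ β i ∧ γ = update2 α i j a (β j)} ∧
    (GammaSet α 2 ∩ GammaSet β 2).ncard = 6 * (q - 2) := by
  refine ⟨gammaSet_inter_eq h, ?_⟩
  simpa using ncard_gammaSet_inter h

/-- If `q ≥ 3` and `d(α,β) = 3`, then `Γ₂(α) ∩ Γ₂(β)` consists exactly of
the vertices `γ(α|i,j|a,β_j)` with `i, j ∈ diff(α,β)` distinct and `a ≠ α_i, β_i`,
and this set has size `6(q-2)`. -/
theorem stmt_6 (m q : ℕ) (hq : 3 ≤ q) (α β : Fin m → Fin q)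
    (h : hammingDist α β = 3) :
    GammaSet α 2 ∩ GammaSet β 2 =
      {γ | ∃ i ∈ diffSet α β, ∃ j ∈ diffSet α β, i ≠ j ∧
        ∃ a : Fin q, a ≠ α i ∧ a ≠ β i ∧ γ = update2 α i j a (β j)} ∧
    (GammaSet α 2 ∩ GammaSet β 2).ncard = 6 * (q - 2) :=
  stmt_6_general m q α β h
end

section
/- Let C = RM_q(s−1,d) and X = Aut(C). Then C is X-completely transitive: for each i with 0 ≤ i ≤ 2 (where 2 is the covering radius of C), the set C_i = {β : d(β,C) = i} is a single orbit of X acting on the vertices of H(q^d,q). -/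
variable {M Q : Type*}

/-- The Reed–Muller code `RM_q(s,d)` (with `s = (q-1)d - 1`): the dual of the repetition
code, i.e. all vertices of `H(q^d, q)` whose entries sum to zero. -/
def RMs (F : Type*) [Field F] [Fintype F] (d : ℕ) : Set ((Fin d → F) → F) :=
  {α | ∑ v : Fin d → F, α v = 0}

/-- The Reed–Muller code `RM_q(s-1,d)` (with `s = (q-1)d - 1`): the members `α` of
`RM_q(s,d)` which additionally satisfy `∑_{v ∈ M} α_v • v = 0`. -/
def RMs1 (F : Type*) [Field F] [Fintype F] (d : ℕ) : Set ((Fin d → F) → F) :=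
  {α | ∑ v : Fin d → F, α v = 0 ∧ ∑ v : Fin d → F, α v • v = 0}

/-! The distance from a vertex `α` to `C = RM_q(s-1,d)` is read off its syndrome
`(∑ α_v, ∑ α_v • v) ∈ F × V`, `V = F^d`: it is `0` if both parts vanish, `1` if the first part
is nonzero (change one entry), and `2` otherwise (no single entry change can repair the second
part without spoiling the first). The maps `α ↦ λ • (α ∘ g⁻¹) + c` with `λ ∈ Fˣ`, `g ∈ AGL(V)`
and `c ∈ C` are automorphisms of `C`, and they act on syndromes by
`(s, w) ↦ (λ s, λ (A w + s t))` where `g v = A v + t`. This action is transitive on each of the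
three syndrome classes, using the transitivity of `GL(V)` on nonzero vectors for the last one. -/

section Hamming

variable {ι R : Type*} [Fintype ι] [DecidableEq R]

theorem hammingNorm_pi_single [DecidableEq ι] [Zero R] (i : ι) {a : R} (ha : a ≠ 0) :
    hammingNorm (Pi.single i a : ι → R) = 1 := by
  rw [hammingNorm, Finset.card_eq_one]
  exact ⟨i, by ext j; by_cases hj : j = i <;> simp [hj, ha]⟩

theorem hammingNorm_pi_single_sub_pi_single [DecidableEq ι] [AddGroup R] {i j : ι} (hij : i ≠ j)
    {a b : R} (ha : a ≠ 0) (hb : b ≠ 0) :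
    hammingNorm (Pi.single i a - Pi.single j b : ι → R) = 2 := by
  rw [hammingNorm, Finset.card_eq_two]
  refine ⟨i, j, hij, ?_⟩
  ext k
  by_cases hki : k = i
  · subst hki; simp [hij, ha]
  · by_cases hkj : k = j
    · subst hkj; simp [hki, hb]
    · simp [hki, hkj]

theorem exists_eq_pi_single_of_hammingNorm_eq_one [DecidableEq ι] [Zero R] {x : ι → R}
    (h : hammingNorm x = 1) : ∃ i, x i ≠ 0 ∧ x = Pi.single i (x i) := by
  obtain ⟨i, hi⟩ := Finset.card_eq_one.mp h
  have hsupp : ∀ j, x j ≠ 0 ↔ j = i := fun j => by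
    simpa [hammingNorm] using Finset.ext_iff.mp hi j
  refine ⟨i, (hsupp i).mpr rfl, funext fun j => ?_⟩
  by_cases hj : j = i
  · subst hj; simp
  · simpa [hj] using mt (hsupp j).mp hj

theorem hammingDist_comp_equiv {κ : Type*} [Fintype κ] (σ : κ ≃ ι) (x y : ι → R) :
    hammingDist (x ∘ σ) (y ∘ σ) = hammingDist x y :=
  Finset.card_bij' (fun k _ => σ k) (fun i _ => σ.symm i) (by simp) (by simp) (by simp) (by simp)

theorem hammingDist_add_right [AddRightCancelSemigroup R] (x y c : ι → R) :
    hammingDist (x + c) (y + c) = hammingDist x y :=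
  hammingDist_comp (fun i => (· + c i)) fun i => add_left_injective (c i)

theorem isCodeDist_zero_iff {C : Set (ι → R)} {β : ι → R} : IsCodeDist C β 0 ↔ β ∈ C :=
  ⟨fun ⟨⟨_, hγ, h⟩, _⟩ => hammingDist_eq_zero.mp h ▸ hγ,
    fun h => ⟨⟨β, h, hammingDist_self β⟩, fun n _ => n.zero_le⟩⟩

theorem exists_isAut_of_sub_mem [AddCommGroup R] {C : AddSubgroup (ι → R)}
    (L : (ι → R) ≃+ (ι → R)) (hL : IsAut L.toEquiv) (hLC : L '' C = C) {β γ : ι → R}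
    (h : γ - L β ∈ C) : ∃ x : (ι → R) ≃ (ι → R), IsAut x ∧ x '' C = C ∧ x β = γ := by
  refine ⟨L.toEquiv.trans (Equiv.addRight (γ - L β)), fun a b => ?_, ?_, by simp⟩
  · simpa [hammingDist_add_right] using hL a b
  · have htrans : (· + (γ - L β)) '' (C : Set (ι → R)) = C := by
      ext a
      simp [Set.image_add_right, C.add_mem_cancel_right (sub_mem_comm_iff.mp h)]
    rw [Equiv.coe_trans, Set.image_comp]
    simpa [hLC] using htrans

end Hamming

theorem exists_linearEquiv_apply_eq {K V : Type*} [Field K] [AddCommGroup V] [Module K V]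
    [FiniteDimensional K V] {v w : V} (hv : v ≠ 0) (hw : w ≠ 0) :
    ∃ A : V ≃ₗ[K] V, A v = w := by
  let f := (LinearEquiv.coord K V v hv).trans (LinearEquiv.toSpanNonzeroSingleton K V w hw)
  obtain ⟨A, hA⟩ := Submodule.exists_linearEquiv_restrict_eq f
  refine ⟨A, ?_⟩
  simpa [f, LinearEquiv.coord_self] using (hA ⟨v, Submodule.mem_span_singleton_self v⟩).symm

section ScaleRelabel

variable {ι R : Type*} [CommRing R]

def scaleRelabel (c : Rˣ) (σ : ι ≃ ι) : (ι → R) ≃ₗ[R] (ι → R) :=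
  (LinearEquiv.funCongrLeft R R σ.symm).trans (LinearEquiv.smulOfUnit c)

theorem scaleRelabel_apply (c : Rˣ) (σ : ι ≃ ι) (α : ι → R) :
    scaleRelabel c σ α = (c : R) • (α ∘ σ.symm) :=
  rfl

theorem isAut_scaleRelabel [Fintype ι] [DecidableEq R] (c : Rˣ) (σ : ι ≃ ι) :
    IsAut (scaleRelabel c σ).toEquiv := fun a b => by
  simp [scaleRelabel_apply, hammingDist_smul fun _ => c.isSMulRegular _, hammingDist_comp_equiv]

end ScaleRelabel

section Syndrome

variable {F V : Type*} [Field F] [Fintype V]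

variable (F V) in
def entrySum : (V → F) →ₗ[F] F := Fintype.linearCombination F fun _ => 1

theorem entrySum_apply (α : V → F) : entrySum F V α = ∑ v, α v := by
  simp [entrySum, Fintype.linearCombination_apply]

@[simp] theorem entrySum_pi_single [DecidableEq V] (v : V) (a : F) :
    entrySum F V (Pi.single v a) = a := by
  simp [entrySum_apply]

theorem entrySum_scaleRelabel (c : Fˣ) (σ : V ≃ V) (α : V → F) :
    entrySum F V (scaleRelabel c σ α) = c * entrySum F V α := by
  simp [scaleRelabel_apply, entrySum_apply, Finset.mul_sum, Equiv.sum_comp σ.symm α]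

variable [AddCommGroup V] [Module F V]

variable (F V) in
def weightedSum : (V → F) →ₗ[F] V := Fintype.linearCombination F id

theorem weightedSum_apply (α : V → F) : weightedSum F V α = ∑ v, α v • v := by
  simp [weightedSum, Fintype.linearCombination_apply]

@[simp] theorem weightedSum_pi_single [DecidableEq V] (v : V) (a : F) :
    weightedSum F V (Pi.single v a) = a • v := by
  simp [weightedSum_apply, Pi.single_apply, ite_smul]

theorem weightedSum_comp_affineEquiv_symm (g : V ≃ᵃ[F] V) (α : V → F) :
    weightedSum F V (α ∘ g.symm) = g.linear (weightedSum F V α) + entrySum F V α • g 0 := by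
  have hg (v : V) : g v = g.linear v + g 0 := by
    simpa using congrFun (AffineMap.decomp g.toAffineMap) v
  rw [weightedSum_apply, ← Equiv.sum_comp g.toEquiv, weightedSum_apply, entrySum_apply, map_sum,
    Finset.sum_smul, ← Finset.sum_add_distrib]
  refine Finset.sum_congr rfl fun v _ => ?_
  simp only [Function.comp_apply, AffineEquiv.coe_toEquiv, AffineEquiv.symm_apply_apply]
  rw [hg v, smul_add, map_smul]

theorem weightedSum_scaleRelabel (c : Fˣ) (g : V ≃ᵃ[F] V) (α : V → F) :
    weightedSum F V (scaleRelabel c g.toEquiv α) =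
      (c : F) • (g.linear (weightedSum F V α) + entrySum F V α • g 0) := by
  rw [scaleRelabel_apply, map_smul, ← weightedSum_comp_affineEquiv_symm]
  rfl

variable (F V) in
def rmCode : Submodule F (V → F) := LinearMap.ker ((entrySum F V).prod (weightedSum F V))

theorem mem_rmCode {α : V → F} :
    α ∈ rmCode F V ↔ entrySum F V α = 0 ∧ weightedSum F V α = 0 := by
  simp [rmCode]

theorem RMs1_eq [Fintype F] (d : ℕ) : RMs1 F d = rmCode F (Fin d → F) := by
  ext α
  simp [RMs1, mem_rmCode, entrySum_apply, weightedSum_apply]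

theorem image_scaleRelabel_rmCode [Fintype F] (c : Fˣ) (g : V ≃ᵃ[F] V) :
    scaleRelabel c g.toEquiv '' rmCode F V = rmCode F V := by
  have hmaps : Set.MapsTo (scaleRelabel c g.toEquiv) (rmCode F V) (rmCode F V) := fun α hα => by
    obtain ⟨h1, h2⟩ := mem_rmCode.mp hα
    exact mem_rmCode.mpr
      ⟨by simp [entrySum_scaleRelabel, h1], by simp [weightedSum_scaleRelabel, h1, h2]⟩
  exact ((Set.toFinite _).injOn_iff_bijOn_of_mapsTo hmaps).mp
    (scaleRelabel c g.toEquiv).injective.injOn |>.image_eq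

end Syndrome

section Distance

variable {F V : Type*} [Field F] [DecidableEq F] [AddCommGroup V] [Module F V] [Fintype V]
  [DecidableEq V] {β : V → F}

theorem isCodeDist_rmCode_one (h : entrySum F V β ≠ 0) : IsCodeDist (rmCode F V) β 1 := by
  set s := entrySum F V β
  refine ⟨⟨β + Pi.single (s⁻¹ • weightedSum F V β) (-s), mem_rmCode.mpr ⟨?_, ?_⟩, ?_⟩, ?_⟩
  · simp [s]
  · simp [smul_smul, h]
  · rw [hammingDist_eq_hammingNorm, neg_add_cancel_left,
      hammingNorm_pi_single _ (neg_ne_zero.mpr h)]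
  · rintro n ⟨γ, hγ, rfl⟩
    refine Nat.one_le_iff_ne_zero.mpr (hammingDist_ne_zero.mpr ?_)
    rintro rfl
    exact h (mem_rmCode.mp hγ).1

theorem isCodeDist_rmCode_two (h1 : entrySum F V β = 0) (h2 : weightedSum F V β ≠ 0) :
    IsCodeDist (rmCode F V) β 2 := by
  refine ⟨⟨β + (Pi.single 0 1 - Pi.single (weightedSum F V β) 1), mem_rmCode.mpr ⟨?_, ?_⟩, ?_⟩, ?_⟩
  · simp [h1]
  · simp
  · rw [hammingDist_eq_hammingNorm, neg_add_cancel_left,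
      hammingNorm_pi_single_sub_pi_single h2.symm one_ne_zero one_ne_zero]
  · rintro n ⟨γ, hγ, rfl⟩
    by_contra! hlt
    interval_cases hn : hammingDist β γ
    · obtain rfl := hammingDist_eq_zero.mp hn
      exact h2 (mem_rmCode.mp hγ).2
    · rw [hammingDist_eq_hammingNorm] at hn
      obtain ⟨u, hu, hsingle⟩ := exists_eq_pi_single_of_hammingNorm_eq_one hn
      have hsum : entrySum F V (-β + γ) = 0 := by simp [h1, (mem_rmCode.mp hγ).1]
      rw [hsingle, entrySum_pi_single] at hsum
      exact hu hsum

theorem isCodeDist_rmCode_one_iff : IsCodeDist (rmCode F V) β 1 ↔ entrySum F V β ≠ 0 := by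
  refine ⟨fun h hs => ?_, isCodeDist_rmCode_one⟩
  by_cases hw : weightedSum F V β = 0
  · exact absurd ((isCodeDist_zero_iff.mpr (mem_rmCode.mpr ⟨hs, hw⟩)).unique h) (by norm_num)
  · exact absurd ((isCodeDist_rmCode_two hs hw).unique h) (by norm_num)

theorem isCodeDist_rmCode_two_iff :
    IsCodeDist (rmCode F V) β 2 ↔ entrySum F V β = 0 ∧ weightedSum F V β ≠ 0 := by
  refine ⟨fun h => ?_, fun h => isCodeDist_rmCode_two h.1 h.2⟩
  by_cases hs : entrySum F V β = 0
  · refine ⟨hs, fun hw => ?_⟩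
    exact absurd ((isCodeDist_zero_iff.mpr (mem_rmCode.mpr ⟨hs, hw⟩)).unique h) (by norm_num)
  · exact absurd ((isCodeDist_rmCode_one hs).unique h) (by norm_num)

end Distance

section Transitivity

variable {F V : Type*} [Field F] [DecidableEq F] [AddCommGroup V] [Module F V] [Fintype V]
  {β γ : V → F}

theorem exists_isAut_rmCode_of_mem (hβ : β ∈ rmCode F V) (hγ : γ ∈ rmCode F V) :
    ∃ x : (V → F) ≃ (V → F), IsAut x ∧ x '' rmCode F V = rmCode F V ∧ x β = γ :=
  exists_isAut_of_sub_mem (C := (rmCode F V).toAddSubgroup) (AddEquiv.refl _) (fun _ _ => rfl)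
    (Set.image_id _) (sub_mem hγ hβ)

variable [Fintype F]

theorem exists_isAut_rmCode_of_syndrome (c : Fˣ) (g : V ≃ᵃ[F] V)
    (h1 : entrySum F V γ = c * entrySum F V β)
    (h2 : weightedSum F V γ = (c : F) • (g.linear (weightedSum F V β) + entrySum F V β • g 0)) :
    ∃ x : (V → F) ≃ (V → F), IsAut x ∧ x '' rmCode F V = rmCode F V ∧ x β = γ :=
  exists_isAut_of_sub_mem (C := (rmCode F V).toAddSubgroup) (scaleRelabel c g.toEquiv).toAddEquiv
    (isAut_scaleRelabel c g.toEquiv) (image_scaleRelabel_rmCode c g)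
    (mem_rmCode.mpr ⟨by simp [entrySum_scaleRelabel, h1], by simp [weightedSum_scaleRelabel, h2]⟩)

theorem exists_isAut_rmCode_of_entrySum_ne_zero (hβ : entrySum F V β ≠ 0)
    (hγ : entrySum F V γ ≠ 0) :
    ∃ x : (V → F) ≃ (V → F), IsAut x ∧ x '' rmCode F V = rmCode F V ∧ x β = γ := by
  set t := (entrySum F V γ)⁻¹ • weightedSum F V γ - (entrySum F V β)⁻¹ • weightedSum F V β
  refine exists_isAut_rmCode_of_syndrome (Units.mk0 _ (div_ne_zero hγ hβ))
    (AffineEquiv.constVAdd F V t) (by rw [Units.val_mk0]; field_simp) ?_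
  simp only [t, Units.val_mk0, AffineEquiv.linear_constVAdd, LinearEquiv.refl_apply,
    AffineEquiv.constVAdd_apply, vadd_eq_add, add_zero]
  match_scalars
  · field_simp
  · field_simp
    ring

theorem exists_isAut_rmCode_of_weightedSum_ne_zero (hβ1 : entrySum F V β = 0)
    (hγ1 : entrySum F V γ = 0) (hβ2 : weightedSum F V β ≠ 0) (hγ2 : weightedSum F V γ ≠ 0) :
    ∃ x : (V → F) ≃ (V → F), IsAut x ∧ x '' rmCode F V = rmCode F V ∧ x β = γ := by
  obtain ⟨A, hA⟩ := exists_linearEquiv_apply_eq (K := F) hβ2 hγ2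
  exact exists_isAut_rmCode_of_syndrome 1 A.toAffineEquiv (by simp [hβ1, hγ1])
    (by rw [hβ1, zero_smul, add_zero, Units.val_one, one_smul]; exact hA.symm)

end Transitivity

theorem stmt_18_general (F : Type) [Field F] [Fintype F] [DecidableEq F] (d : ℕ) (hd : 1 ≤ d) :
    ∀ i : ℕ, i ≤ 2 →
      (∃ β : (Fin d → F) → F, IsCodeDist (RMs1 F d) β i) ∧
      (∀ β γ : (Fin d → F) → F, IsCodeDist (RMs1 F d) β i → IsCodeDist (RMs1 F d) γ i →
        ∃ x : ((Fin d → F) → F) ≃ ((Fin d → F) → F), IsAut x ∧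
          x '' RMs1 F d = RMs1 F d ∧ x β = γ) := by
  have : Nonempty (Fin d) := ⟨⟨0, hd⟩⟩
  rw [RMs1_eq]
  intro i hi
  interval_cases i
  · simp only [isCodeDist_zero_iff, SetLike.mem_coe]
    exact ⟨⟨0, zero_mem _⟩, fun β γ => exists_isAut_rmCode_of_mem⟩
  · simp only [isCodeDist_rmCode_one_iff]
    exact ⟨⟨Pi.single 0 1, by simp⟩, fun β γ => exists_isAut_rmCode_of_entrySum_ne_zero⟩
  · simp only [isCodeDist_rmCode_two_iff]
    obtain ⟨v, hv⟩ := exists_ne (0 : Fin d → F)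
    refine ⟨⟨Pi.single v 1 - Pi.single 0 1, by simp, by simpa using hv⟩, fun β γ hβ hγ => ?_⟩
    exact exists_isAut_rmCode_of_weightedSum_ne_zero hβ.1 hγ.1 hβ.2 hγ.2

/-- `C = RM_q(s-1,d)` is `Aut(C)`-completely transitive: for each
`0 ≤ i ≤ 2` (where 2 is the covering radius), the set `C_i = {β | d(β,C) = i}` is a
single orbit of the automorphism group of `C`. -/
theorem stmt_18 (F : Type) [Field F] [Fintype F] [DecidableEq F] (d : ℕ) (hd : 1 ≤ d)
    (hdq : (d, Fintype.card F) ≠ (1, 2)) :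
    ∀ i : ℕ, i ≤ 2 →
      (∃ β : (Fin d → F) → F, IsCodeDist (RMs1 F d) β i) ∧
      (∀ β γ : (Fin d → F) → F, IsCodeDist (RMs1 F d) β i → IsCodeDist (RMs1 F d) γ i →
        ∃ x : ((Fin d → F) → F) ≃ ((Fin d → F) → F), IsAut x ∧
          x '' RMs1 F d = RMs1 F d ∧ x β = γ) :=
  stmt_18_general F d hd
end
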